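/- arXiv:1312.7531 — 5 statements merged into one kernel-verified Lean document; each statement's English description precedes it below -/
import Mathlib

section
/- Let G be an ℓ×ℓ integer matrix with all row sums and column sums equal to zero, and let G₁ be the (ℓ-1)×(ℓ-1) matrix obtained from G by deleting the last row and last column. If the Smith normal form of G over ℤ is diag(1,…,1,d₁,…,d_r,0) with d_i ≥ 0 and d_{i-1} ∣ d_i, then the Smith normal form of G₁ is diag(1,…,1,d₁,…,d_r). -/
/-!
Adding all rows of `G` to its last row and then all columns to its last column is a unimodular
change that turns `G` into `B = G₁ ⊕ 0`, so `B = P * diagonal d * Q` with `P`, `Q` unimodular.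
Since the last row of `B` vanishes, the last row `x` of `P` satisfies `x k * d k = 0`, i.e. it is
supported where `d` vanishes; being a row of a unimodular matrix it is also unimodular. Over a PID
a unimodular row can be carried to a standard basis vector by a unimodular change of the
coordinates where `d` vanishes only, and such a change commutes past `diagonal d`. Doing the same
with the last column of `Q` and deleting the last row and column (where `d` is `0`) gives
`G₁ = P₁ * diagonal d₁ * Q₁` with `P₁`, `Q₁` unimodular.
-/

open Matrix

namespace Matrix

variable {R ι : Type*} [CommRing R] [IsDomain R] [IsPrincipalIdealRing R]
  [Fintype ι] [DecidableEq ι]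

theorem exists_isUnit_det_vecMul_eq_single (x c : ι → R) (hxc : x ⬝ᵥ c = 1) (i₀ : ι) :
    ∃ S : Matrix ι ι R, IsUnit S.det ∧ x ᵥ* S = Pi.single i₀ 1 := by
  -- the columns of `S` are `c` together with a basis of `ker (x ⬝ᵥ ·)`
  let f : (ι → R) →ₗ[R] R := dotProductBilin R R x
  have hfc : f c = 1 := hxc
  obtain ⟨n, bK⟩ := Submodule.basisOfPid (Pi.basisFun R ι) (LinearMap.ker f)
  let b := Module.Basis.mkFinCons c bK
    (fun a v hv h => by
      simpa [hfc, LinearMap.mem_ker.1 hv] using congr_arg f h)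
    (fun z => ⟨-f z, by
      rw [LinearMap.mem_ker, map_add, map_smul, hfc, smul_eq_mul, mul_one, add_neg_cancel]⟩)
  let e := ((Pi.basisFun R ι).indexEquiv b).trans
    (Equiv.swap ((Pi.basisFun R ι).indexEquiv b i₀) 0)
  have he : e i₀ = 0 := by simp [e]
  refine ⟨(Pi.basisFun R ι).toMatrix (b.reindex e.symm), ?_, ?_⟩
  · rw [← Module.Basis.det_apply]; exact (Pi.basisFun R ι).isUnit_det _
  · ext j
    have hxS_apply : (x ᵥ* (Pi.basisFun R ι).toMatrix (b.reindex e.symm)) j = f (b (e j)) := by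
      simp [f, vecMul, dotProduct, Module.Basis.toMatrix_apply]
    rw [hxS_apply]
    rcases eq_or_ne j i₀ with rfl | hj
    · simpa [he, b] using hfc
    · obtain ⟨k, hk⟩ := Fin.exists_succ_eq.2 (he ▸ e.injective.ne hj)
      simp [← hk, b, Pi.single_eq_of_ne hj]

theorem exists_isUnit_det_vecMul_eq_single_of_support (p : ι → Prop) [DecidablePred p]
    (x c : ι → R) (hxc : x ⬝ᵥ c = 1) (hx : ∀ i, ¬p i → x i = 0) (i₀ : ι) (hi₀ : p i₀) :
    ∃ S : Matrix ι ι R, IsUnit S.det ∧ (∀ i j, ¬p j → S i j = (1 : Matrix ι ι R) i j) ∧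
      x ᵥ* S = Pi.single i₀ 1 := by
  let e := Equiv.sumCompl p
  have hxe : x ∘ e = Sum.elim (fun i : {i // p i} => x i) 0 := by
    ext (i | i)
    · rfl
    · exact hx i i.2
  have hxc' : (fun i : {i // p i} => x i) ⬝ᵥ (fun i => c i) = 1 := by
    rw [← hxc, dotProduct, dotProduct, ← Fintype.sum_subtype_add_sum_subtype p]
    simp [fun i : {i // ¬p i} => hx i i.2]
  obtain ⟨S, hS, hxS⟩ := exists_isUnit_det_vecMul_eq_single _ _ hxc' ⟨i₀, hi₀⟩
  refine ⟨reindex e e (fromBlocks S 0 0 1), ?_, fun i j hj => ?_, ?_⟩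
  · simpa [det_fromBlocks_zero₂₁] using hS
  · by_cases hi : p i
    · simp [e, Equiv.sumCompl_symm_apply_of_pos hi, Equiv.sumCompl_symm_apply_of_neg hj,
        one_apply_ne (show i ≠ j from fun h => hj (h ▸ hi))]
    · simp [e, Equiv.sumCompl_symm_apply_of_neg hi, Equiv.sumCompl_symm_apply_of_neg hj,
        one_apply, Subtype.ext_iff]
  · rw [reindex_apply, submatrix_vecMul_equiv, Equiv.symm_symm, hxe, vecMul_fromBlocks]
    ext j
    by_cases hj : p j
    · simp [e, Equiv.sumCompl_symm_apply_of_pos hj, hxS, Pi.single_apply, Subtype.ext_iff]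
    · simp [e, Equiv.sumCompl_symm_apply_of_neg hj, show j ≠ i₀ from fun h => hj (h ▸ hi₀)]

theorem exists_row_eq_single_of_mul_diagonal (P : Matrix ι ι R) (hP : IsUnit P.det) (d : ι → R)
    (i₀ : ι) (hd : d i₀ = 0) (hPd : ∀ k, P i₀ k * d k = 0) :
    ∃ P' : Matrix ι ι R, IsUnit P'.det ∧ P' i₀ = Pi.single i₀ 1 ∧
      P' * diagonal d = P * diagonal d := by
  classical
  have hxc : P i₀ ⬝ᵥ (fun k => P⁻¹ k i₀) = 1 := by
    simpa [mul_apply, dotProduct] using congr_fun (congr_fun (mul_nonsing_inv P hP) i₀) i₀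
  obtain ⟨S, hS, hS_one, hxS⟩ := exists_isUnit_det_vecMul_eq_single_of_support (d · = 0) _ _ hxc
    (fun k hk => (mul_eq_zero.1 (hPd k)).resolve_right hk) i₀ hd
  have hSd : S * diagonal d = diagonal d := by
    ext i j
    by_cases hj : d j = 0
    · obtain rfl | hij := eq_or_ne i j <;> simp [*]
    · obtain rfl | hij := eq_or_ne i j <;> simp [hS_one _ _ hj, *]
  exact ⟨P * S, by rw [det_mul]; exact hP.mul hS, hxS, by rw [mul_assoc, hSd]⟩

theorem exists_col_eq_single_of_diagonal_mul (Q : Matrix ι ι R) (hQ : IsUnit Q.det) (d : ι → R)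
    (i₀ : ι) (hd : d i₀ = 0) (hQd : ∀ k, d k * Q k i₀ = 0) :
    ∃ Q' : Matrix ι ι R, IsUnit Q'.det ∧ Q'ᵀ i₀ = Pi.single i₀ 1 ∧
      diagonal d * Q' = diagonal d * Q := by
  obtain ⟨P', hP', hrow, hP'd⟩ := exists_row_eq_single_of_mul_diagonal Qᵀ (by rwa [det_transpose])
    d i₀ hd (fun k => by rw [transpose_apply, mul_comm, hQd])
  refine ⟨P'ᵀ, by rwa [det_transpose], hrow, ?_⟩
  simpa using congr_arg transpose hP'd

section Fin

variable {R : Type*} {n : ℕ}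

theorem det_submatrix_castSucc_of_row_last_eq_single [CommRing R]
    (M : Matrix (Fin (n + 1)) (Fin (n + 1)) R)
    (h : M (Fin.last n) = Pi.single (Fin.last n) 1) :
    (M.submatrix Fin.castSucc Fin.castSucc).det = M.det := by
  rw [det_succ_row M (Fin.last n), Fintype.sum_eq_single (Fin.last n)]
  · simp [h, Fin.succAbove_last, ← two_mul, pow_mul]
  · intro j hj
    simp [h, hj]

theorem submatrix_mul_diagonal_mul_of_last_eq_zero [NonUnitalNonAssocSemiring R] {m o : Type*}
    (A C : Matrix (Fin (n + 1)) (Fin (n + 1)) R) (d : Fin (n + 1) → R) (hd : d (Fin.last n) = 0)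
    (f : m → Fin (n + 1)) (g : o → Fin (n + 1)) :
    (A * diagonal d * C).submatrix f g =
      A.submatrix f Fin.castSucc * diagonal (fun i : Fin n => d i.castSucc) *
        C.submatrix Fin.castSucc g := by
  ext i j
  rw [submatrix_apply, mul_apply, mul_apply, Fin.sum_univ_castSucc]
  simp [mul_diagonal, hd]

end Fin

theorem exists_isUnit_mul_submatrix_castSucc_mul_eq_diagonal {R : Type*} [CommRing R] [IsDomain R]
    [IsPrincipalIdealRing R] {n : ℕ} (B P Q : Matrix (Fin (n + 1)) (Fin (n + 1)) R)
    (d : Fin (n + 1) → R) (hP : IsUnit P.det) (hQ : IsUnit Q.det) (hB : P * diagonal d * Q = B)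
    (hd : d (Fin.last n) = 0) (hrow : B (Fin.last n) = 0) (hcol : ∀ i, B i (Fin.last n) = 0) :
    ∃ U V : Matrix (Fin n) (Fin n) R, IsUnit U.det ∧ IsUnit V.det ∧
      U * B.submatrix Fin.castSucc Fin.castSucc * V = diagonal (fun i => d i.castSucc) := by
  have hPd : ∀ k, P (Fin.last n) k * d k = 0 := by
    have hPD : P * diagonal d = B * Q⁻¹ := by rw [← hB, mul_nonsing_inv_cancel_right _ _ hQ]
    intro k
    have h := congr_fun (congr_fun hPD (Fin.last n)) k
    rw [mul_diagonal, mul_apply, hrow] at h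
    simpa using h
  have hQd : ∀ k, d k * Q k (Fin.last n) = 0 := by
    have hDQ : diagonal d * Q = P⁻¹ * B := by
      rw [← hB, mul_assoc, nonsing_inv_mul_cancel_left _ _ hP]
    intro k
    have h := congr_fun (congr_fun hDQ k) (Fin.last n)
    rw [diagonal_mul, mul_apply] at h
    simpa [hcol] using h
  obtain ⟨P', hP', hP'_last, hP'd⟩ := exists_row_eq_single_of_mul_diagonal P hP d _ hd hPd
  obtain ⟨Q', hQ', hQ'_last, hQ'd⟩ := exists_col_eq_single_of_diagonal_mul Q hQ d _ hd hQd
  have hB' : P' * diagonal d * Q' = B := by rw [hP'd, mul_assoc, hQ'd, ← mul_assoc, hB]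
  set P₁ := P'.submatrix Fin.castSucc Fin.castSucc
  set Q₁ := Q'.submatrix Fin.castSucc Fin.castSucc
  have hP₁ : IsUnit P₁.det := by
    rwa [det_submatrix_castSucc_of_row_last_eq_single P' hP'_last]
  have hQ₁ : IsUnit Q₁.det := by
    rwa [← det_transpose, transpose_submatrix,
      det_submatrix_castSucc_of_row_last_eq_single _ hQ'_last, det_transpose]
  refine ⟨P₁⁻¹, Q₁⁻¹, isUnit_nonsing_inv_det _ hP₁, isUnit_nonsing_inv_det _ hQ₁, ?_⟩
  rw [← hB', submatrix_mul_diagonal_mul_of_last_eq_zero _ _ _ hd]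
  simp [P₁, Q₁, mul_assoc, nonsing_inv_mul_cancel_left _ _ hP₁, mul_nonsing_inv _ hQ₁]

section RowColumnSums

variable {R ι : Type*} [Fintype ι] [DecidableEq ι]

theorem det_one_updateRow_const_one [CommRing R] (i₀ : ι) :
    ((1 : Matrix ι ι R).updateRow i₀ fun _ => 1).det = 1 := by
  have hones : (fun _ => 1 : ι → R) = ∑ k, (fun _ => (1 : R)) k • (1 : Matrix ι ι R) k := by
    ext j
    rw [Finset.sum_apply]
    simp [one_apply]
  rw [hones, det_updateRow_sum, det_one, one_smul]

theorem one_updateRow_mul_mul_transpose_of_sum_eq_zero [NonAssocSemiring R] (G : Matrix ι ι R)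
    (i₀ : ι) (hrow : ∀ i, ∑ k, G i k = 0) (hcol : ∀ j, ∑ k, G k j = 0) :
    (1 : Matrix ι ι R).updateRow i₀ (fun _ => 1) * G *
        ((1 : Matrix ι ι R).updateRow i₀ fun _ => 1)ᵀ =
      (G.updateRow i₀ 0).updateCol i₀ 0 := by
  have hcol' : (fun _ => 1) ᵥ* G = 0 := by
    ext j; simp [vecMul, dotProduct, hcol]
  have hrow' : G.updateRow i₀ 0 *ᵥ (fun _ => 1) = 0 := by
    ext i
    obtain rfl | hi := eq_or_ne i i₀
    · simp [mulVec]
    · simp [mulVec, dotProduct, hi, hrow]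
  rw [updateRow_mul, one_mul, hcol', ← updateCol_transpose, transpose_one, mul_updateCol, mul_one,
    hrow']

end RowColumnSums

end Matrix

theorem snf_of_deleted_row_col_general
    (l : ℕ) (G : Matrix (Fin (l + 1)) (Fin (l + 1)) ℤ)
    (hrow : ∀ i, ∑ k, G i k = 0) (hcol : ∀ i, ∑ k, G k i = 0)
    (U V : Matrix (Fin (l + 1)) (Fin (l + 1)) ℤ) (d : Fin (l + 1) → ℤ)
    (hU : IsUnit U.det) (hV : IsUnit V.det)
    (hdiag : U * G * V = Matrix.diagonal d)
    (hlast : d (Fin.last l) = 0) :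
    ∃ U' V' : Matrix (Fin l) (Fin l) ℤ,
      IsUnit U'.det ∧ IsUnit V'.det ∧
      U' * G.submatrix Fin.castSucc Fin.castSucc * V' =
        Matrix.diagonal (fun i => d i.castSucc) := by
  have hEG := one_updateRow_mul_mul_transpose_of_sum_eq_zero G (Fin.last l) hrow hcol
  set E := (1 : Matrix (Fin (l + 1)) (Fin (l + 1)) ℤ).updateRow (Fin.last l) fun _ => 1
  have hE : IsUnit E.det := by rw [det_one_updateRow_const_one]; exact isUnit_one
  have hB : E * U⁻¹ * diagonal d * (V⁻¹ * Eᵀ) =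
      (G.updateRow (Fin.last l) 0).updateCol (Fin.last l) 0 := by
    rw [← hEG, ← hdiag]
    simp only [mul_assoc, nonsing_inv_mul_cancel_left _ _ hU, mul_nonsing_inv_cancel_left _ _ hV]
  have hB₁ : ((G.updateRow (Fin.last l) 0).updateCol (Fin.last l) 0).submatrix Fin.castSucc
      Fin.castSucc = G.submatrix Fin.castSucc Fin.castSucc := by
    ext i j
    simp [updateRow_apply, Fin.castSucc_ne_last]
  obtain ⟨U', V', hU', hV', h⟩ := exists_isUnit_mul_submatrix_castSucc_mul_eq_diagonal _ _ _ d
    (by rw [det_mul]; exact hE.mul (isUnit_nonsing_inv_det _ hU))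
    (by rw [det_mul, det_transpose]; exact (isUnit_nonsing_inv_det _ hV).mul hE) hB hlast
    (by ext j; simp [updateCol_apply]) (by simp)
  exact ⟨U', V', hU', hV', hB₁ ▸ h⟩

/-- Let `G` be an `(l+1) × (l+1)` integer matrix with all row and column sums zero, and
let `G₁` be obtained from `G` by deleting the last row and column.  If the Smith normal
form of `G` over `ℤ` is `diag(d 0, d 1, …, d (l-1), 0)` (with nonnegative entries, each
dividing the next, the last entry being `0`), then the Smith normal form of `G₁` is
`diag(d 0, …, d (l-1))`. -/
theorem snf_of_deleted_row_col
    (l : ℕ) (G : Matrix (Fin (l + 1)) (Fin (l + 1)) ℤ)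
    (hrow : ∀ i, ∑ k, G i k = 0) (hcol : ∀ i, ∑ k, G k i = 0)
    (U V : Matrix (Fin (l + 1)) (Fin (l + 1)) ℤ) (d : Fin (l + 1) → ℤ)
    (hU : IsUnit U.det) (hV : IsUnit V.det)
    (hdiag : U * G * V = Matrix.diagonal d)
    (hnonneg : ∀ i, 0 ≤ d i)
    (hchain : ∀ i : Fin l, d i.castSucc ∣ d i.succ)
    (hlast : d (Fin.last l) = 0) :
    ∃ U' V' : Matrix (Fin l) (Fin l) ℤ,
      IsUnit U'.det ∧ IsUnit V'.det ∧
      U' * G.submatrix Fin.castSucc Fin.castSucc * V' =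
        Matrix.diagonal (fun i => d i.castSucc) :=
  snf_of_deleted_row_col_general l G hrow hcol U V d hU hV hdiag hlast
end

section
/- Let G', G'' ∈ M_{ℓ-1}(ℤ), and suppose Q̂ (G' ⊕ (0)) P̂' = G'' ⊕ (0) where Q̂ is upper triangular and P̂' is lower triangular, both invertible over ℤ. Then G' and G'' are ℤ-equivalent. -/
open Matrix Fin

private lemma blk_castSucc {l : ℕ} (G : Matrix (Fin l) (Fin l) ℤ) (k m : Fin l) :
    (Matrix.reindex finSumFinEquiv finSumFinEquiv
      (Matrix.fromBlocks G 0 0 (0 : Matrix (Fin 1) (Fin 1) ℤ))) k.castSucc m.castSucc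
      = G k m := by
  have hk : (k.castSucc : Fin (l + 1)) = Fin.castAdd 1 k := rfl
  have hm : (m.castSucc : Fin (l + 1)) = Fin.castAdd 1 m := rfl
  simp [hk, hm, Matrix.reindex_apply, Matrix.submatrix_apply,
    finSumFinEquiv_symm_apply_castAdd]

private lemma blk_last_right {l : ℕ} (G : Matrix (Fin l) (Fin l) ℤ) (k : Fin (l + 1)) :
    (Matrix.reindex finSumFinEquiv finSumFinEquiv
      (Matrix.fromBlocks G 0 0 (0 : Matrix (Fin 1) (Fin 1) ℤ))) k (Fin.last l) = 0 := by
  simp only [Matrix.reindex_apply, Matrix.submatrix_apply, finSumFinEquiv_symm_last]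
  rcases finSumFinEquiv.symm k with a | a <;> simp

private lemma blk_last_left {l : ℕ} (G : Matrix (Fin l) (Fin l) ℤ) (m : Fin (l + 1)) :
    (Matrix.reindex finSumFinEquiv finSumFinEquiv
      (Matrix.fromBlocks G 0 0 (0 : Matrix (Fin 1) (Fin 1) ℤ))) (Fin.last l) m = 0 := by
  simp only [Matrix.reindex_apply, Matrix.submatrix_apply, finSumFinEquiv_symm_last]
  rcases finSumFinEquiv.symm m with a | a <;> simp

/-- Let `G', G'' ∈ M_l(ℤ)`, and suppose `Q̂ * (G' ⊕ (0)) * P̂' = G'' ⊕ (0)` where `Q̂`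
is upper triangular and `P̂'` is lower triangular, both invertible over `ℤ`.  Then `G'`
and `G''` are `ℤ`-equivalent. -/
theorem ZEquiv_of_triangular_conjugation
    (l : ℕ) (G' G'' : Matrix (Fin l) (Fin l) ℤ)
    (Qhat Phat : Matrix (Fin (l + 1)) (Fin (l + 1)) ℤ)
    (hQ : IsUnit Qhat.det) (hP : IsUnit Phat.det)
    (hQup : ∀ i j, j < i → Qhat i j = 0)
    (hPlow : ∀ i j, i < j → Phat i j = 0)
    (heq : Qhat *
        Matrix.reindex finSumFinEquiv finSumFinEquiv (Matrix.fromBlocks G' 0 0 0) *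
        Phat =
      Matrix.reindex finSumFinEquiv finSumFinEquiv (Matrix.fromBlocks G'' 0 0 0)) :
    ∃ U V : Matrix (Fin l) (Fin l) ℤ,
      IsUnit U.det ∧ IsUnit V.det ∧ U * G' * V = G'' := by
  set U : Matrix (Fin l) (Fin l) ℤ := fun i j => Qhat i.castSucc j.castSucc with hU
  set V : Matrix (Fin l) (Fin l) ℤ := fun i j => Phat i.castSucc j.castSucc with hV
  refine ⟨U, V, ?_, ?_, ?_⟩
  · -- det U is a unit
    have hQdet : Qhat.det = ∏ i, Qhat i i :=
      Matrix.det_of_upperTriangular (fun i j h => hQup i j h)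
    have hUdet : U.det = ∏ i : Fin l, Qhat i.castSucc i.castSucc :=
      Matrix.det_of_upperTriangular
        (fun i j h => hQup i.castSucc j.castSucc (by simpa using h))
    have : Qhat.det = U.det * Qhat (Fin.last l) (Fin.last l) := by
      rw [hQdet, hUdet, Fin.prod_univ_castSucc]
    rw [this] at hQ
    exact isUnit_of_mul_isUnit_left hQ
  · have hPdet : Phat.det = ∏ i, Phat i i :=
      Matrix.det_of_lowerTriangular Phat (fun i j h => hPlow i j (by simpa using h))
    have hVdet : V.det = ∏ i : Fin l, Phat i.castSucc i.castSucc :=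
      Matrix.det_of_lowerTriangular V
        (fun i j h => hPlow i.castSucc j.castSucc (by simpa using h))
    have : Phat.det = V.det * Phat (Fin.last l) (Fin.last l) := by
      rw [hPdet, hVdet, Fin.prod_univ_castSucc]
    rw [this] at hP
    exact isUnit_of_mul_isUnit_left hP
  · ext i j
    have h := congrFun (congrFun heq i.castSucc) j.castSucc
    simp only [Matrix.mul_apply] at h
    rw [blk_castSucc] at h
    rw [Fin.sum_univ_castSucc (n := l)] at h
    simp only [blk_last_right, mul_zero, zero_mul, Finset.sum_const_zero, add_zero] at h
    have hinner : ∀ m : Fin l,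
        (∑ k : Fin (l + 1), Qhat i.castSucc k *
          (Matrix.reindex finSumFinEquiv finSumFinEquiv
            (Matrix.fromBlocks G' 0 0 (0 : Matrix (Fin 1) (Fin 1) ℤ))) k m.castSucc)
        = ∑ k : Fin l, Qhat i.castSucc k.castSucc * G' k m := by
      intro m
      rw [Fin.sum_univ_castSucc (n := l)]
      simp [blk_castSucc, blk_last_left]
    simp only [hinner] at h
    rw [Matrix.mul_apply, ← h]
    refine Finset.sum_congr rfl fun m _ => ?_
    rw [Matrix.mul_apply]
end

section
/- Let r, p' ≥ 1 and let B_r be the r×r matrix with every row equal to (−2, 2, −2, 2, …). The block matrix [[ c·B_r , p'·c·B_r ], [ −E_r , 0 ]] (of size 2r×2r, with c = m p' + α' any positive integer) is ℤ-equivalent to (p'·c·B_r) ⊕ E_r-block structure, and hence ℤ-equivalent to diag(2 p' c, 0^{(r−1)}, 1^{(r)}). -/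
/-!
The lower-left block `-1` can be used to clear the upper-left block by row operations, so
`[[A, X], [-1, 0]]` is `ℤ`-equivalent to `X ⊕ 1` for any `A`; it remains to diagonalize
`X = p' c B`. Writing `s j = (-1)^(j+1)`, the matrix `B = 2 · 1 sᵀ` has rank one, and since
`s` is a sign vector, `diag(s)` turns `sᵀ` back into `1ᵀ`. A unimodular `P` with
`P 1 = e₀` then gives `P B (diag(s) Pᵀ) = 2 e₀ e₀ᵀ`.
-/

open Matrix

namespace Matrix

theorem vecMulVec_single_one_single_one {n R : Type*} [DecidableEq n] [MulZeroOneClass R]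
    (i : n) :
    vecMulVec (Pi.single i (1 : R)) (Pi.single i 1) = diagonal (Pi.single i 1) := by
  rw [← single_eq_single_vecMulVec_single, diagonal_single]

variable {n R : Type*} [Fintype n] [DecidableEq n] [CommRing R]

theorem exists_isUnit_det_mul_fromBlocks_neg_one_zero_mul (A X : Matrix n n R)
    {P Q : Matrix n n R} (hP : IsUnit P.det) (hQ : IsUnit Q.det) :
    ∃ U V : Matrix (n ⊕ n) (n ⊕ n) R, IsUnit U.det ∧ IsUnit V.det ∧
      U * fromBlocks A X (-1) 0 * V = fromBlocks (P * X * Q) 0 0 1 := by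
  refine ⟨fromBlocks P (P * A) 0 (-1), fromBlocks 0 1 Q 0, ?_, ?_, ?_⟩
  · apply isUnit_det_of_right_inverse (B := fromBlocks P⁻¹ A 0 (-1))
    simp [fromBlocks_multiply, mul_nonsing_inv _ hP, ← fromBlocks_one]
  · apply isUnit_det_of_right_inverse (B := fromBlocks 0 Q⁻¹ 1 0)
    simp [fromBlocks_multiply, mul_nonsing_inv _ hQ, ← fromBlocks_one]
  · simp [fromBlocks_multiply, Matrix.mul_assoc]

/-- The transvection-like matrix `1 - (1 - eᵢ) eᵢᵀ` subtracts row `i` from every other row. -/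
theorem exists_isUnit_det_mulVec_one_eq_single (i : n) :
    ∃ P : Matrix n n R, IsUnit P.det ∧ P *ᵥ 1 = Pi.single i 1 := by
  set N : Matrix n n R := vecMulVec (1 - Pi.single i 1) (Pi.single i 1)
  have hN : N * N = 0 := by
    simp [N, vecMulVec_mul_vecMulVec, single_dotProduct]
  refine ⟨1 - N, isUnit_det_of_right_inverse (B := 1 + N) ?_, ?_⟩
  · simp [sub_mul, mul_add, hN]
  · simp [N, sub_mulVec, vecMulVec_mulVec, single_dotProduct]

theorem mul_vecMulVec_one_mul_diagonal_mul_transpose {s : n → R} (hs : ∀ j, s j * s j = 1)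
    (P : Matrix n n R) :
    P * vecMulVec 1 s * (diagonal s * Pᵀ) = vecMulVec (P *ᵥ 1) (P *ᵥ 1) := by
  have hsD : s ᵥ* diagonal s = 1 := by
    ext j; simp [vecMul_diagonal, hs]
  rw [mul_vecMulVec, ← Matrix.mul_assoc, vecMulVec_mul, vecMulVec_mul, hsD, vecMul_transpose]

end Matrix

theorem block_matrix_ZEquiv_diag'_general
    (r : ℕ) (hr : 0 < r) (p' c : ℤ)
    (B : Matrix (Fin r) (Fin r) ℤ)
    (hB : B = Matrix.of fun (_ j : Fin r) => (-1 : ℤ) ^ ((j : ℕ) + 1) * 2) :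
    ∃ U V : Matrix (Fin r ⊕ Fin r) (Fin r ⊕ Fin r) ℤ,
      IsUnit U.det ∧ IsUnit V.det ∧
      U * Matrix.fromBlocks (c • B) ((p' * c) • B) (-1) 0 * V =
        Matrix.diagonal (Sum.elim
          (fun (i : Fin r) => if (i : ℕ) = 0 then 2 * p' * c else 0)
          (fun (_ : Fin r) => 1)) := by
  set s : Fin r → ℤ := fun j => (-1) ^ ((j : ℕ) + 1)
  have hs : ∀ j, s j * s j = 1 := fun j => by simp [s, ← mul_pow]
  have hB' : B = (2 : ℤ) • vecMulVec 1 s := by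
    ext i j; simp [hB, s, mul_comm]
  obtain ⟨P, hP, hP1⟩ := exists_isUnit_det_mulVec_one_eq_single (R := ℤ) (⟨0, hr⟩ : Fin r)
  have hD : IsUnit (diagonal s).det :=
    isUnit_det_of_right_inverse (B := diagonal s) (by simp [hs])
  obtain ⟨U, V, hU, hV, hUV⟩ := exists_isUnit_det_mul_fromBlocks_neg_one_zero_mul (c • B)
    ((p' * c) • B) hP (Q := diagonal s * Pᵀ) (by simpa [det_mul] using hD.mul hP)
  refine ⟨U, V, hU, hV, ?_⟩
  rw [hUV, hB', smul_smul, Matrix.mul_smul, Matrix.smul_mul,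
    mul_vecMulVec_one_mul_diagonal_mul_transpose hs, hP1, vecMulVec_single_one_single_one,
    ← diagonal_smul, ← diagonal_one, fromBlocks_diagonal]
  congr 2
  ext i
  simp only [Pi.smul_apply, Pi.single_apply, Fin.ext_iff, smul_eq_mul]
  split_ifs <;> ring

/-- Let `r, p' ≥ 1`, let `B` be the `r × r` matrix with every row `(-2, 2, -2, 2, …)`,
and let `c` be a positive integer.  The `2r × 2r` block matrix
`[[ c·B , p'·c·B ], [ -E , 0 ]]` is `ℤ`-equivalent to the diagonal matrix
`diag(2 p' c, 0^{(r-1)}, 1^{(r)})`. -/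
theorem block_matrix_ZEquiv_diag'
    (r : ℕ) (hr : 0 < r) (p' c : ℤ) (hp' : 1 ≤ p') (hc : 0 < c)
    (B : Matrix (Fin r) (Fin r) ℤ)
    (hB : B = Matrix.of fun (_ j : Fin r) => (-1 : ℤ) ^ ((j : ℕ) + 1) * 2) :
    ∃ U V : Matrix (Fin r ⊕ Fin r) (Fin r ⊕ Fin r) ℤ,
      IsUnit U.det ∧ IsUnit V.det ∧
      U * Matrix.fromBlocks (c • B) ((p' * c) • B) (-1) 0 * V =
        Matrix.diagonal (Sum.elim
          (fun (i : Fin r) => if (i : ℕ) = 0 then 2 * p' * c else 0)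
          (fun (_ : Fin r) => 1)) :=
  block_matrix_ZEquiv_diag'_general r hr p' c B hB
end

section
/- Let N_q be the q×q nilpotent shift matrix and p ≤ q with q = mp + α, 0 ≤ α < p. Then the matrix ((E_q − N_q²)(E_q − N_q^p))^{-1} applied on the left to the q×q matrix whose only nonzero block is B_{2,p} (the 2×p matrix with rows (−2,2,−2,…)) in the bottom-left of the left p columns yields a matrix whose left p columns consist of vertically stacked blocks …, 3B_{p,p}, 2B_{p,p}, B_{p,p} (reading from bottom up, the j-th block from the bottom is j·B_{p,p}) and whose right q−p columns are zero. -/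
lemma shift_pow (q : ℕ) (N : Matrix (Fin q) (Fin q) ℤ)
    (hN : N = Matrix.of fun (i j : Fin q) => if (i : ℕ) + 1 = (j : ℕ) then 1 else 0) (k : ℕ) :
    N ^ k = Matrix.of fun (i j : Fin q) => if (i : ℕ) + k = (j : ℕ) then 1 else 0 := by
  induction k with
  | zero =>
    ext i j
    simp [Matrix.one_apply, Fin.val_eq_val]
  | succ k ih =>
    rw [pow_succ, ih, hN]
    ext i j
    simp only [Matrix.mul_apply, Matrix.of_apply]
    rcases lt_or_ge ((i : ℕ) + k) q with h | h
    · rw [Finset.sum_eq_single (⟨(i : ℕ) + k, h⟩ : Fin q)]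
      · simp; omega
      · intro b _ hb
        have : (i : ℕ) + k ≠ (b : ℕ) := fun hc => hb (by ext; simp [hc.symm])
        simp [this]
      · simp
    · rw [Finset.sum_eq_zero]
      · have : (i : ℕ) + (k + 1) ≠ (j : ℕ) := by omega
        simp [this]
      · intro b _
        have : (i : ℕ) + k ≠ (b : ℕ) := by omega
        simp [this]

lemma key_arith (p q i : ℕ) (hp : 2 ≤ p) (hi : i < q) :
    (if i < q then (((q - 1 - i) / p + 1 : ℕ) : ℤ) else 0)
      - (if i + 2 < q then (((q - 1 - (i + 2)) / p + 1 : ℕ) : ℤ) else 0)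
      - (if i + p < q then (((q - 1 - (i + p)) / p + 1 : ℕ) : ℤ) else 0)
      + (if i + p + 2 < q then (((q - 1 - (i + p + 2)) / p + 1 : ℕ) : ℤ) else 0)
    = if q - 2 ≤ i then 1 else 0 := by
  rw [if_pos hi]
  rcases le_or_gt q (i + 2) with hA | hB2
  · rw [if_neg (by omega), if_neg (by omega), if_neg (by omega), if_pos (by omega)]
    have : (q - 1 - i) / p = 0 := Nat.div_eq_of_lt (by omega)
    rw [this]; norm_num
  · rcases lt_or_ge (i + p + 2) q with hB | hC
    · rw [if_pos (by omega), if_pos (by omega), if_pos hB, if_neg (by omega)]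
      have e1 : q - 1 - i = (q - 1 - (i + p)) + p := by omega
      have e2 : q - 1 - (i + 2) = (q - 1 - (i + p + 2)) + p := by omega
      rw [e1, e2, Nat.add_div_right _ (by omega), Nat.add_div_right _ (by omega)]
      push_cast; ring
    · rcases le_or_gt q (i + p) with hC1 | hD
      · rw [if_pos hB2, if_neg (by omega), if_neg (by omega), if_neg (by omega)]
        have d1 : (q - 1 - i) / p = 0 := Nat.div_eq_of_lt (by omega)
        have d2 : (q - 1 - (i + 2)) / p = 0 := Nat.div_eq_of_lt (by omega)
        rw [d1, d2]; norm_num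
      · rw [if_pos hB2, if_pos hD, if_neg (by omega), if_neg (by omega)]
        have e1 : q - 1 - i = (q - 1 - (i + p)) + p := by omega
        rw [e1, Nat.add_div_right _ (by omega)]
        have d1 : (q - 1 - (i + p)) / p = 0 := Nat.div_eq_of_lt (by omega)
        have d2 : (q - 1 - (i + 2)) / p = 0 := Nat.div_eq_of_lt (by omega)
        rw [d1, d2]; norm_num

/-- Let `N` be the `q × q` nilpotent shift matrix and `p ≤ q` with `q = mp + α`,
`0 ≤ α < p` (`p`, `q` even).  Applying `((E - N²)(E - N^p))⁻¹` on the left to the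
`q × q` matrix whose only nonzero block is `B_{2,p}` (all rows `(-2, 2, -2, …)`) in the
bottom-left of the left `p` columns yields the matrix whose left `p` columns are the
vertically stacked blocks `…, 3B_{p,p}, 2B_{p,p}, B_{p,p}` (the `j`-th block from the
bottom being `j · B_{p,p}`) and whose right `q - p` columns are zero. -/
theorem inverse_applied_to_bottom_block
    (p q m α : ℕ) (hp : 0 < p) (hpq : p ≤ q) (hpe : Even p) (hqe : Even q)
    (hq : q = m * p + α) (hα : α < p)
    (N M R : Matrix (Fin q) (Fin q) ℤ)
    (hN : N = Matrix.of fun (i j : Fin q) => if (i : ℕ) + 1 = (j : ℕ) then 1 else 0)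
    (hM : M = Matrix.of fun (i j : Fin q) =>
      if q - 2 ≤ (i : ℕ) ∧ (j : ℕ) < p then (-1 : ℤ) ^ ((j : ℕ) + 1) * 2 else 0)
    (hR : R = Matrix.of fun (i j : Fin q) =>
      if (j : ℕ) < p then
        (((q - 1 - (i : ℕ)) / p + 1 : ℕ) : ℤ) * ((-1 : ℤ) ^ ((j : ℕ) + 1) * 2)
      else 0) :
    ((1 - N ^ 2) * (1 - N ^ p))⁻¹ * M = R := by
  have hp2 : 2 ≤ p := by rcases hpe with ⟨k, hk⟩; omega
  have hNpow := shift_pow q N hN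
  -- N is nilpotent
  have hNq : N ^ q = 0 := by
    rw [hNpow]
    ext i j
    have : (i : ℕ) + q ≠ (j : ℕ) := by omega
    simp [this]
  have hnil : IsNilpotent N := ⟨q, hNq⟩
  have hunit : ∀ k : ℕ, 0 < k → IsUnit (1 - N ^ k) := by
    intro k hk
    refine IsNilpotent.isUnit_one_sub ⟨q, ?_⟩
    rw [← pow_mul]
    rcases Nat.exists_eq_add_of_le (Nat.le_mul_of_pos_left q hk) with ⟨c, hc⟩
    rw [hc, pow_add, hNq, zero_mul]
  have hu2 : IsUnit (1 - N ^ 2) := hunit 2 (by norm_num)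
  have hup : IsUnit (1 - N ^ p) := hunit p hp
  have hdet : IsUnit ((1 - N ^ 2) * (1 - N ^ p)).det :=
    (Matrix.isUnit_iff_isUnit_det _).mp (hu2.mul hup)
  -- entry of N ^ k * R
  have hNR : ∀ (k : ℕ) (i j : Fin q), (N ^ k * R) i j =
      (if (i : ℕ) + k < q then (((q - 1 - ((i : ℕ) + k)) / p + 1 : ℕ) : ℤ) else 0) *
        (if (j : ℕ) < p then (-1 : ℤ) ^ ((j : ℕ) + 1) * 2 else 0) := by
    intro k i j
    rw [hNpow, hR]
    simp only [Matrix.mul_apply, Matrix.of_apply]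
    rcases lt_or_ge ((i : ℕ) + k) q with h | h
    · rw [Finset.sum_eq_single (⟨(i : ℕ) + k, h⟩ : Fin q)]
      · simp only [Fin.val_mk, if_pos rfl, one_mul, if_pos h]
        by_cases hj : (j : ℕ) < p
        · simp [hj]
        · simp [hj]
      · intro b _ hb
        have : (i : ℕ) + k ≠ (b : ℕ) := fun hc => hb (by ext; simp [hc.symm])
        simp [this]
      · simp
    · rw [if_neg (by omega), Finset.sum_eq_zero, zero_mul]
      intro b _
      have : (i : ℕ) + k ≠ (b : ℕ) := by omega
      simp [this]
  -- main product identity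
  have hAR : (1 - N ^ 2) * (1 - N ^ p) * R = M := by
    have hexp : (1 - N ^ 2) * (1 - N ^ p) * R
        = R - N ^ 2 * R - N ^ p * R + N ^ (2 + p) * R := by
      rw [pow_add]; noncomm_ring
    rw [hexp]
    ext i j
    simp only [Matrix.sub_apply, Matrix.add_apply]
    have hR0 : R i j =
        (if (i : ℕ) + 0 < q then (((q - 1 - ((i : ℕ) + 0)) / p + 1 : ℕ) : ℤ) else 0) *
          (if (j : ℕ) < p then (-1 : ℤ) ^ ((j : ℕ) + 1) * 2 else 0) := by
      have := hNR 0 i j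
      rwa [pow_zero, one_mul] at this
    rw [hR0, hNR 2 i j, hNR p i j, hNR (2 + p) i j, hM]
    simp only [Nat.add_zero, Matrix.of_apply]
    have harith := key_arith p q (i : ℕ) hp2 i.isLt
    have e : (i : ℕ) + (2 + p) = (i : ℕ) + p + 2 := by omega
    rw [e]
    calc (if (i : ℕ) < q then (((q - 1 - (i : ℕ)) / p + 1 : ℕ) : ℤ) else 0) *
            (if (j : ℕ) < p then (-1 : ℤ) ^ ((j : ℕ) + 1) * 2 else 0)
          - (if (i : ℕ) + 2 < q then (((q - 1 - ((i : ℕ) + 2)) / p + 1 : ℕ) : ℤ) else 0) *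
            (if (j : ℕ) < p then (-1 : ℤ) ^ ((j : ℕ) + 1) * 2 else 0)
          - (if (i : ℕ) + p < q then (((q - 1 - ((i : ℕ) + p)) / p + 1 : ℕ) : ℤ) else 0) *
            (if (j : ℕ) < p then (-1 : ℤ) ^ ((j : ℕ) + 1) * 2 else 0)
          + (if (i : ℕ) + p + 2 < q then (((q - 1 - ((i : ℕ) + p + 2)) / p + 1 : ℕ) : ℤ) else 0) *
            (if (j : ℕ) < p then (-1 : ℤ) ^ ((j : ℕ) + 1) * 2 else 0)
        = ((if (i : ℕ) < q then (((q - 1 - (i : ℕ)) / p + 1 : ℕ) : ℤ) else 0)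
            - (if (i : ℕ) + 2 < q then (((q - 1 - ((i : ℕ) + 2)) / p + 1 : ℕ) : ℤ) else 0)
            - (if (i : ℕ) + p < q then (((q - 1 - ((i : ℕ) + p)) / p + 1 : ℕ) : ℤ) else 0)
            + (if (i : ℕ) + p + 2 < q then (((q - 1 - ((i : ℕ) + p + 2)) / p + 1 : ℕ) : ℤ) else 0)) *
            (if (j : ℕ) < p then (-1 : ℤ) ^ ((j : ℕ) + 1) * 2 else 0) := by ring
      _ = (if q - 2 ≤ (i : ℕ) then 1 else 0) *
            (if (j : ℕ) < p then (-1 : ℤ) ^ ((j : ℕ) + 1) * 2 else 0) := by rw [harith]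
      _ = (if q - 2 ≤ (i : ℕ) ∧ (j : ℕ) < p then (-1 : ℤ) ^ ((j : ℕ) + 1) * 2 else 0) := by
            by_cases h1 : q - 2 ≤ (i : ℕ) <;> by_cases h2 : (j : ℕ) < p <;>
              simp [h1, h2]
  rw [← hAR, ← mul_assoc, Matrix.nonsing_inv_mul _ hdet, one_mul]
end

section
/- Let T ∈ M_p(ℤ) (in r×r blocks, p = p'r) be upper block-triangular with identity blocks on the diagonal and −E_r in all blocks of the first block-row beyond the first, and let T' be the same with +E_r. Then both T and T' are invertible over ℤ, and T'·G'₄·T, where G'₄ = (block form of) E_p − W_p^{−α}, has its entire first block-row equal to zero. -/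
/-!
Both shears are upper unitriangular, hence unimodular. Row `i < r` of `T'` is the indicator
of the residue class of `i` mod `r`, so row `i` of `T' * G'₄` sums each column of `G'₄` over
that class. Column `l` of `G'₄` is `e_l - e_{(l + α) mod p}`, and since `r ∣ p` and `r ∣ α`
both indices lie in the same class mod `r`: the sum vanishes already for `T' * G'₄`.
-/

open Matrix Finset

variable {R : Type*} {p : ℕ}

/-- `E_p` plus `c • E_r` in every off-diagonal block of the first block-row. -/
def firstBlockRowShear [Zero R] [One R] (p r : ℕ) (c : R) : Matrix (Fin p) (Fin p) R :=
  Matrix.of fun (i j : Fin p) =>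
    if i = j then 1 else if (i : ℕ) / r = 0 ∧ (i : ℕ) % r = (j : ℕ) % r then c else 0

/-- The matrix `E_p - W_p^{-α}`. -/
def cyclicDifference [AddCommGroupWithOne R] (p α : ℕ) : Matrix (Fin p) (Fin p) R :=
  Matrix.of fun (i j : Fin p) =>
    (if i = j then 1 else 0) - if (i : ℕ) = ((j : ℕ) + α) % p then 1 else 0

theorem Nat.le_of_div_eq_zero_of_mod_eq {i j r : ℕ} (hi : i / r = 0) (hij : i % r = j % r) :
    i ≤ j := by
  have := Nat.div_add_mod i r
  have := Nat.mod_le j r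
  rw [hi, mul_zero, zero_add] at *
  omega

theorem Nat.add_mod_mod_of_dvd {l α p r : ℕ} (hrp : r ∣ p) (hrα : r ∣ α) :
    (l + α) % p % r = l % r := by
  rw [Nat.mod_mod_of_dvd _ hrp, Nat.add_mod, Nat.dvd_iff_mod_eq_zero.1 hrα, add_zero, Nat.mod_mod]

theorem det_firstBlockRowShear [CommRing R] (r : ℕ) (c : R) :
    (firstBlockRowShear p r c).det = 1 := by
  rw [det_of_isUpperTriangular]
  · simp [firstBlockRowShear]
  · intro i j hji
    have hij : i ≠ j := (Fin.ne_of_lt hji).symm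
    simp only [firstBlockRowShear, of_apply, if_neg hij, ite_eq_right_iff, and_imp]
    intro hi hmod
    exact absurd hji (not_lt.2 (Nat.le_of_div_eq_zero_of_mod_eq hi hmod))

theorem firstBlockRowShear_one_apply_of_lt [Zero R] [One R] {r : ℕ} {i : Fin p} (hi : (i : ℕ) < r)
    (k : Fin p) : firstBlockRowShear p r (1 : R) i k = if (k : ℕ) % r = i then 1 else 0 := by
  have hmod : (i : ℕ) % r = i := Nat.mod_eq_of_lt hi
  unfold firstBlockRowShear
  by_cases h : i = k
  · subst h; simp [hmod]
  · simp [h, hi, hmod, eq_comm]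

theorem firstBlockRowShear_one_mul_apply_of_lt [NonAssocSemiring R] {r : ℕ} {i : Fin p}
    (hi : (i : ℕ) < r) (M : Matrix (Fin p) (Fin p) R) (l : Fin p) :
    (firstBlockRowShear p r (1 : R) * M) i l = ∑ k : Fin p with k.val % r = i, M k l := by
  simp [mul_apply, firstBlockRowShear_one_apply_of_lt hi, sum_filter]

theorem sum_mod_eq_indicator [AddCommMonoidWithOne R] (r i : ℕ) {n : ℕ} (hn : n < p) :
    ∑ k : Fin p with k.val % r = i, (if (k : ℕ) = n then (1 : R) else 0) =
      if n % r = i then 1 else 0 := by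
  have : ∀ k : Fin p, (k : ℕ) = n ↔ k = ⟨n, hn⟩ := fun k => by rw [Fin.ext_iff]
  simp [this]

theorem sum_mod_cyclicDifference [AddCommGroupWithOne R] {r α : ℕ} (hrp : r ∣ p) (hrα : r ∣ α)
    (i : ℕ) (l : Fin p) :
    ∑ k : Fin p with k.val % r = i, cyclicDifference p α k l = (0 : R) := by
  have hp : 0 < p := l.pos
  simp only [cyclicDifference, of_apply, Fin.ext_iff, sum_sub_distrib,
    sum_mod_eq_indicator r i l.isLt, sum_mod_eq_indicator r i (Nat.mod_lt _ hp),
    Nat.add_mod_mod_of_dvd hrp hrα, sub_self]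

theorem first_block_row_vanishes_general
    (p r p' α α' : ℕ) (hp' : p = p' * r) (hα' : α = α' * r)
    (T T' G'₄ : Matrix (Fin p) (Fin p) ℤ)
    (hT : T = Matrix.of fun (i j : Fin p) =>
      if i = j then (1 : ℤ)
      else if (i : ℕ) / r = 0 ∧ (i : ℕ) % r = (j : ℕ) % r then -1 else 0)
    (hT' : T' = Matrix.of fun (i j : Fin p) =>
      if i = j then (1 : ℤ)
      else if (i : ℕ) / r = 0 ∧ (i : ℕ) % r = (j : ℕ) % r then 1 else 0)
    (hG : G'₄ = Matrix.of fun (i j : Fin p) =>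
      (if i = j then (1 : ℤ) else 0) -
        (if (i : ℕ) = ((j : ℕ) + α) % p then 1 else 0)) :
    IsUnit T.det ∧ IsUnit T'.det ∧
    ∀ (i j : Fin p), (i : ℕ) < r → (T' * G'₄ * T) i j = 0 := by
  change T = firstBlockRowShear p r (-1) at hT
  change T' = firstBlockRowShear p r 1 at hT'
  change G'₄ = cyclicDifference p α at hG
  subst hT hT' hG
  refine ⟨by simp [det_firstBlockRowShear], by simp [det_firstBlockRowShear], fun i j hi => ?_⟩
  have hrow : ∀ l, (firstBlockRowShear p r 1 * cyclicDifference p α : Matrix _ _ ℤ) i l = 0 :=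
    fun l => by rw [firstBlockRowShear_one_mul_apply_of_lt hi,
      sum_mod_cyclicDifference (Dvd.intro_left _ hp'.symm) (Dvd.intro_left _ hα'.symm)]
  rw [mul_apply]
  simp [hrow]

/-- Let `T ∈ M_p(ℤ)` (in `r × r` blocks, `p = p'r`) be upper block-triangular with
identity blocks on the diagonal and `-E_r` in every block of the first block-row beyond
the first, and let `T'` be the same with `+E_r`.  Then `T` and `T'` are invertible over
`ℤ`, and `T' * G'₄ * T`, where `G'₄ = E_p - W_p^{-α}` (with `r ∣ α`, `0 < α < p`), has
its entire first block-row (the first `r` rows) equal to zero. -/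
theorem first_block_row_vanishes
    (p r p' α α' : ℕ) (hr : 0 < r) (hp' : p = p' * r) (hα' : α = α' * r)
    (hα0 : 0 < α) (hαp : α < p)
    (T T' G'₄ : Matrix (Fin p) (Fin p) ℤ)
    (hT : T = Matrix.of fun (i j : Fin p) =>
      if i = j then (1 : ℤ)
      else if (i : ℕ) / r = 0 ∧ (i : ℕ) % r = (j : ℕ) % r then -1 else 0)
    (hT' : T' = Matrix.of fun (i j : Fin p) =>
      if i = j then (1 : ℤ)
      else if (i : ℕ) / r = 0 ∧ (i : ℕ) % r = (j : ℕ) % r then 1 else 0)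
    (hG : G'₄ = Matrix.of fun (i j : Fin p) =>
      (if i = j then (1 : ℤ) else 0) -
        (if (i : ℕ) = ((j : ℕ) + α) % p then 1 else 0)) :
    IsUnit T.det ∧ IsUnit T'.det ∧
    ∀ (i j : Fin p), (i : ℕ) < r → (T' * G'₄ * T) i j = 0 :=
  first_block_row_vanishes_general p r p' α α' hp' hα' T T' G'₄ hT hT' hG
end
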